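/- arXiv:math/0302151 — 5 statements merged into one kernel-verified Lean document; each statement's English description precedes it below -/
import Mathlib

section
/- Let (W, S) be a Coxeter system with length function l, and let K, K' ⊆ S. If x is the unique minimal-length element of the double coset W_K x W_{K'} (i.e. x ∈ ᴷW ∩ Wᴷ') and u ∈ W_{K'} is minimal in its coset (W_{K' ∩ x⁻¹Kx})·u (i.e. u has no left descent in K' ∩ x⁻¹Kx), then xu has minimal length in W_K·(xu) and l(xu) = l(x) + l(u). -/
namespace Lusztig

variable {B : Type*} {W : Type*} [Group W] {M : CoxeterMatrix B}

/-- The standard parabolic subgroup `W_K` generated by the simple reflections in `K`. -/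
def WP (cs : CoxeterSystem M W) (K : Set B) : Subgroup W :=
  Subgroup.closure (cs.simple '' K)

/-- `w` is the unique minimal length element of its left coset `W_K w`
(i.e. `w ∈ ᴷW`). -/
def IsMinL (cs : CoxeterSystem M W) (K : Set B) (w : W) : Prop :=
  ∀ a ∈ WP cs K, a * w ≠ w → cs.length w < cs.length (a * w)

/-- `w` is the unique minimal length element of its right coset `w W_K`
(i.e. `w ∈ Wᴷ`). -/
def IsMinR (cs : CoxeterSystem M W) (K : Set B) (w : W) : Prop :=
  ∀ b ∈ WP cs K, w * b ≠ w → cs.length w < cs.length (w * b)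

/-- `x` is the unique minimal length element of its double coset `W_K x W_{K'}`
(i.e. `x ∈ ᴷWᴷ'`). -/
def IsMinDC (cs : CoxeterSystem M W) (K K' : Set B) (x : W) : Prop :=
  ∀ a ∈ WP cs K, ∀ b ∈ WP cs K', a * x * b ≠ x → cs.length x < cs.length (a * x * b)

/-- `x` is the unique minimal length element of the double coset `W_K g W_{K'}`. -/
def IsMinOf (cs : CoxeterSystem M W) (K K' : Set B) (g x : W) : Prop :=
  (∃ a ∈ WP cs K, ∃ b ∈ WP cs K', x = a * g * b) ∧
  ∀ a ∈ WP cs K, ∀ b ∈ WP cs K', a * g * b ≠ x → cs.length x < cs.length (a * g * b)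

/-- `Ad(x)J ∩ S`, as a set of indices of simple reflections:
the set of `s` with `simple s = x * (simple t) * x⁻¹` for some `t ∈ J`. -/
def AdSet (cs : CoxeterSystem M W) (x : W) (J : Set B) : Set B :=
  {s | ∃ t ∈ J, cs.simple s = x * cs.simple t * x⁻¹}

/-- The product `u 0 * u 1 * ⋯ * u (n-1)`. -/
def pr (u : ℕ → W) (n : ℕ) : W := ((List.range n).map u).prod

/-- Lusztig's set `S(J, ε)` (2.3): sequences `(J_n, J'_n, u_n)` with
`J = J_0 ⊇ J_1 ⊇ ⋯`, `ε(J_n) = ε(J_{n-1}) ∩ Ad(u_0⋯u_{n-1})J_{n-1}` (n ≥ 1),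
`J'_0 = ε(J) = J'`, `J'_n = J_{n-1} ∩ Ad(u_0⋯u_{n-1})⁻¹ε(J_{n-1})` (n ≥ 1),
`u_n ∈ W_{J_{n-1}}` (n ≥ 1), `u_n ∈ {}^{J'_n}W ∩ W^{J_n}` (n ≥ 0).
Here `ε` is encoded by its restriction `f : B ≃ B` to the simple reflections. -/
structure SSeq (cs : CoxeterSystem M W) (f : B ≃ B) (J : Set B) where
  Jn : ℕ → Set B
  J'n : ℕ → Set B
  u : ℕ → W
  hJ0 : Jn 0 = J
  hJ'0 : J'n 0 = f '' J
  hmono : ∀ n, Jn (n + 1) ⊆ Jn n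
  hb : ∀ n, f '' Jn (n + 1) = (f '' Jn n) ∩ AdSet cs (pr u (n + 1)) (Jn n)
  hc : ∀ n, J'n (n + 1) = Jn n ∩ AdSet cs (pr u (n + 1))⁻¹ (f '' Jn n)
  hd : ∀ n, u (n + 1) ∈ WP cs (Jn n)
  he : ∀ n, IsMinL cs (J'n n) (u n) ∧ IsMinR cs (Jn n) (u n)

/-- Lusztig's set `T(J, ε)` (2.2): sequences `(J_n, w_n)` with
`J = J_0 ⊇ J_1 ⊇ ⋯`, `J_n = J_{n-1} ∩ ε⁻¹(Ad(w_{n-1})J_{n-1})` (n ≥ 1),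
`w_n ∈ {}^{ε(J_n)}W^{J_n}` (n ≥ 0), `w_n ∈ W_{ε(J_n)} w_{n-1} W_{J_{n-1}}` (n ≥ 1). -/
structure TSeq (cs : CoxeterSystem M W) (f : B ≃ B) (J : Set B) where
  Jn : ℕ → Set B
  w : ℕ → W
  hJ0 : Jn 0 = J
  hmono : ∀ n, Jn (n + 1) ⊆ Jn n
  hb : ∀ n, Jn (n + 1) = Jn n ∩ f.symm '' AdSet cs (w n) (Jn n)
  hc : ∀ n, IsMinDC cs (f '' Jn n) (Jn n) (w n)
  hd : ∀ n, ∃ a ∈ WP cs (f '' Jn (n + 1)), ∃ b ∈ WP cs (Jn n), w (n + 1) = a * w n * b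

/-!
Since `x` is minimal in `x W_{K'}`, lengths add along that coset, so `l(xu) = l(x) + l(u)`.
For `xu ∈ ᴷW` it suffices that no `s ∈ K` is a left descent of `xu`. As `x ∈ ᴷW`,
`l(sx) = l(x) + 1`, and by Deodhar's lemma either `sx` is again minimal in `sx W_{K'}`, whence
`l(sxu) = l(sx) + l(u) > l(xu)`, or `sx = xs'` with `s' ∈ K' ∩ x⁻¹Kx`, whence
`l(sxu) = l(x) + l(s'u) > l(x) + l(u)` by the hypothesis on `u`.

The Coxeter-group input is the exchange property, obtained from the reflection cocycle: `W` acts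
on `W × ZMod 2` so that the parity of the number of occurrences of `t` in the right inversion
sequence of a word only depends on the product of the word.
-/

open CoxeterSystem List

section ReflectionCocycle

open scoped Classical

variable (cs : CoxeterSystem M W)

local prefix:100 "s " => cs.simple
local prefix:100 "π " => cs.wordProd
local prefix:100 "ℓ " => cs.length
local prefix:100 "ris " => cs.rightInvSeq

lemma conj_eq_iff_eq_conj (a t u : W) : a * t * a⁻¹ = u ↔ t = a⁻¹ * u * a := by
  constructor <;> rintro rfl <;> group

/-- The action of `s i` on `T × {±1}` from the proof of the exchange property (Björner–Brenti,
§1.4), with the set `T` of reflections enlarged to all of `W`. -/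
noncomputable def reflMap (i : B) (p : W × ZMod 2) : W × ZMod 2 :=
  (s i * p.1 * s i, p.2 + if p.1 = s i then 1 else 0)

lemma reflMap_involutive (i : B) : Function.Involutive (reflMap cs i) := by
  rintro ⟨t, ε⟩
  have hfix : s i * t * s i = s i ↔ t = s i := by
    simp [mul_assoc, mul_eq_one_iff_eq_inv]
  ext
  · simp [reflMap, mul_assoc]
  · by_cases ht : t = s i <;> simp [reflMap, hfix, ht, add_assoc, CharTwo.add_self_eq_zero]

noncomputable def reflPerm (i : B) : Equiv.Perm (W × ZMod 2) :=
  (reflMap_involutive cs i).toPerm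

lemma prod_map_reflPerm (ω : List B) (p : W × ZMod 2) :
    (ω.map (reflPerm cs)).prod p = (π ω * p.1 * (π ω)⁻¹, p.2 + (ris ω).count p.1) := by
  induction ω with
  | nil => simp
  | cons i ω ih =>
    have hfix : π ω * p.1 * (π ω)⁻¹ = s i ↔ (π ω)⁻¹ * s i * π ω = p.1 := by
      rw [conj_eq_iff_eq_conj, eq_comm]
    rw [map_cons, prod_cons, Equiv.Perm.mul_apply, ih]
    simp only [reflPerm, Function.Involutive.coe_toPerm, reflMap, hfix, rightInvSeq, count_cons,
      beq_iff_eq, wordProd_cons]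
    ext
    · simp [mul_assoc]
    · push_cast
      ring

def pairPowWord (i j : B) (k : ℕ) : List B := (replicate k [i, j]).flatten

lemma pairPowWord_succ (i j : B) (k : ℕ) :
    pairPowWord i j (k + 1) = i :: j :: pairPowWord i j k := rfl

lemma prod_map_pairPowWord {G : Type*} [Monoid G] (f : B → G) (i j : B) (k : ℕ) :
    ((pairPowWord i j k).map f).prod = (f i * f j) ^ k := by
  induction k with
  | zero => simp [pairPowWord]
  | succ k ih => rw [pairPowWord_succ, map_cons, map_cons, prod_cons, prod_cons, ih, pow_succ',
      mul_assoc]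

lemma wordProd_pairPowWord (i j : B) (k : ℕ) : π (pairPowWord i j k) = (s i * s j) ^ k :=
  prod_map_pairPowWord cs.simple i j k

lemma simple_mul_pow_eq (i j : B) (k : ℕ) :
    s j * (s i * s j) ^ k = (s i * s j)⁻¹ ^ k * s j := by
  induction k with
  | zero => simp
  | succ k ih =>
    rw [pow_succ, ← mul_assoc, ih, pow_succ, mul_assoc, mul_assoc]
    simp [mul_assoc]

def dihedralRefl (i j : B) (n : ℕ) : W := (s i * s j)⁻¹ ^ n * s j

lemma rightInvSeq_pairPowWord (i j : B) (k : ℕ) :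
    ris (pairPowWord i j k) = ((range (2 * k)).map (dihedralRefl cs i j)).reverse := by
  induction k with
  | zero => rfl
  | succ k ih =>
    have hq : (s i * s j)⁻¹ = s j * s i := by simp
    have heven : ((s i * s j) ^ k)⁻¹ * s j * (s i * s j) ^ k = dihedralRefl cs i j (2 * k) := by
      rw [mul_assoc, simple_mul_pow_eq, ← inv_pow, ← mul_assoc, ← pow_add, ← two_mul, dihedralRefl]
    have hodd : (s j * (s i * s j) ^ k)⁻¹ * s i * (s j * (s i * s j) ^ k) =
        dihedralRefl cs i j (2 * k + 1) := by
      rw [show (s j * (s i * s j) ^ k)⁻¹ * s i * (s j * (s i * s j) ^ k) =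
          ((s i * s j) ^ k)⁻¹ * ((s j * s i) * (s j * (s i * s j) ^ k)) by
            rw [mul_inv_rev, cs.inv_simple]; group,
        ← hq, simple_mul_pow_eq, ← inv_pow, dihedralRefl]
      group
    rw [pairPowWord_succ, rightInvSeq, rightInvSeq, ih, show 2 * (k + 1) = 2 * k + 1 + 1 by ring,
      range_succ, range_succ, wordProd_cons, wordProd_pairPowWord, heven, hodd]
    simp

lemma reflPerm_isLiftable : M.IsLiftable (reflPerm cs) := by
  intro i j
  have hper : dihedralRefl cs i j ∘ (M i j + ·) = dihedralRefl cs i j := by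
    ext n
    simp [dihedralRefl, pow_add]
  ext ⟨t, ε⟩ : 1
  rw [← prod_map_pairPowWord, prod_map_reflPerm, wordProd_pairPowWord, cs.simple_mul_simple_pow,
    rightInvSeq_pairPowWord, count_reverse, two_mul, range_add, map_append, map_map, hper,
    count_append]
  simp [CharTwo.add_self_eq_zero]

noncomputable def reflRep : W →* Equiv.Perm (W × ZMod 2) :=
  cs.lift ⟨reflPerm cs, reflPerm_isLiftable cs⟩

lemma reflRep_wordProd (ω : List B) : reflRep cs (π ω) = (ω.map (reflPerm cs)).prod := by
  rw [wordProd, map_list_prod, map_map]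
  congr 2
  ext1 i
  exact cs.lift_apply_simple (reflPerm_isLiftable cs) i

/-- The parity of the number of occurrences of `t` in the right inversion sequence of any word
for `w` (`reflCocycle_wordProd`); it is well defined because it is read off `reflRep`. -/
noncomputable def reflCocycle (w t : W) : ZMod 2 := (reflRep cs w (t, 0)).2

lemma reflCocycle_wordProd (ω : List B) (t : W) :
    reflCocycle cs (π ω) t = (ris ω).count t := by
  simp [reflCocycle, reflRep_wordProd, prod_map_reflPerm]

lemma reflRep_apply (w t : W) (ε : ZMod 2) :
    reflRep cs w (t, ε) = (w * t * w⁻¹, ε + reflCocycle cs w t) := by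
  obtain ⟨ω, rfl⟩ := cs.wordProd_surjective w
  simp [reflCocycle_wordProd, reflRep_wordProd, prod_map_reflPerm]

lemma reflCocycle_mul (a b t : W) :
    reflCocycle cs (a * b) t = reflCocycle cs b t + reflCocycle cs a (b * t * b⁻¹) := by
  have h := congrArg Prod.snd (reflRep_apply cs (a * b) t 0)
  rw [map_mul, Equiv.Perm.mul_apply, reflRep_apply, reflRep_apply] at h
  simpa using h.symm

lemma reflCocycle_one (t : W) : reflCocycle cs 1 t = 0 := by
  simpa using reflCocycle_wordProd cs [] t

lemma reflCocycle_simple_self (i : B) : reflCocycle cs (s i) (s i) = 1 := by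
  simpa using reflCocycle_wordProd cs [i] (s i)

lemma reflCocycle_self {t : W} (ht : cs.IsReflection t) : reflCocycle cs t t = 1 := by
  obtain ⟨u, i, rfl⟩ := ht
  -- the two occurrences of `η(u, s i)` cancel mod 2
  have hinv := reflCocycle_mul cs u u⁻¹ (u * s i * u⁻¹)
  have hsplit := reflCocycle_mul cs (u * s i) u⁻¹ (u * s i * u⁻¹)
  have hleft := reflCocycle_mul cs u (s i) (s i)
  have hconj : u⁻¹ * (u * s i * u⁻¹) * u⁻¹⁻¹ = s i := by group
  have hfix : s i * s i * (s i)⁻¹ = s i := by group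
  rw [hconj] at hinv hsplit
  rw [hfix, reflCocycle_simple_self] at hleft
  rw [mul_inv_cancel, reflCocycle_one] at hinv
  linear_combination hsplit + hleft - hinv

lemma mem_rightInvSeq_of_reflCocycle_ne_zero {ω : List B} {t : W}
    (h : reflCocycle cs (π ω) t ≠ 0) : t ∈ ris ω := by
  by_contra hmem
  rw [reflCocycle_wordProd, count_eq_zero.mpr hmem, Nat.cast_zero] at h
  exact h rfl

lemma length_mul_lt_of_reflCocycle_ne_zero {w t : W} (h : reflCocycle cs w t ≠ 0) :
    ℓ (w * t) < ℓ w := by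
  obtain ⟨ω, hω, rfl⟩ := cs.exists_isReduced w
  exact (cs.isRightInversion_of_mem_rightInvSeq hω (mem_rightInvSeq_of_reflCocycle_ne_zero cs h)).2

lemma reflCocycle_ne_zero_of_length_mul_lt {w t : W} (ht : cs.IsReflection t)
    (h : ℓ (w * t) < ℓ w) : reflCocycle cs w t ≠ 0 := by
  intro h0
  have h1 : reflCocycle cs (w * t) t ≠ 0 := by
    rw [reflCocycle_mul, mul_inv_cancel_right, h0, reflCocycle_self cs ht, add_zero]
    exact one_ne_zero
  have h2 := length_mul_lt_of_reflCocycle_ne_zero cs h1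
  rw [mul_assoc, ht.mul_self, mul_one] at h2
  omega

/-- The exchange property. -/
theorem exists_wordProd_eraseIdx_eq_mul {ω : List B} {t : W} (ht : cs.IsReflection t)
    (h : ℓ (t * π ω) < ℓ (π ω)) : ∃ k < ω.length, π (ω.eraseIdx k) = t * π ω := by
  have ht' : cs.IsReflection ((π ω)⁻¹ * t * π ω) := by simpa using ht.conj (π ω)⁻¹
  have hlt : ℓ (π ω * ((π ω)⁻¹ * t * π ω)) < ℓ (π ω) := by simpa [mul_assoc] using h
  obtain ⟨k, hk, hkt⟩ := List.mem_iff_getElem.mp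
    (mem_rightInvSeq_of_reflCocycle_ne_zero cs (reflCocycle_ne_zero_of_length_mul_lt cs ht' hlt))
  refine ⟨k, by simpa using hk, ?_⟩
  rw [← cs.wordProd_mul_getD_rightInvSeq, getD_eq_getElem _ _ hk, hkt]
  group

end ReflectionCocycle

section Parabolic

variable (cs : CoxeterSystem M W)

local prefix:100 "s " => cs.simple
local prefix:100 "π " => cs.wordProd
local prefix:100 "ℓ " => cs.length

theorem exists_wordProd_eraseIdx_append {α ω : List B} {t : W} (ht : cs.IsReflection t)
    (h : ℓ (t * π (α ++ ω)) < ℓ (π (α ++ ω))) :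
    (∃ k < α.length, π (α.eraseIdx k) = t * π α) ∨
      ∃ k < ω.length, π (ω.eraseIdx k) = (π α)⁻¹ * t * π α * π ω := by
  obtain ⟨k, hk, hkt⟩ := exists_wordProd_eraseIdx_eq_mul cs ht h
  rcases lt_or_ge k α.length with hkα | hkα
  · left
    refine ⟨k, hkα, mul_right_cancel (b := π ω) ?_⟩
    rwa [eraseIdx_append_of_lt_length hkα, wordProd_append, wordProd_append, ← mul_assoc] at hkt
  · right
    refine ⟨k - α.length, by rw [length_append] at hk; omega, ?_⟩
    rw [eraseIdx_append_of_length_le hkα, wordProd_append, wordProd_append] at hkt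
    calc π (ω.eraseIdx (k - α.length))
        = (π α)⁻¹ * (π α * π (ω.eraseIdx (k - α.length))) := by group
      _ = (π α)⁻¹ * t * π α * π ω := by rw [hkt]; group

lemma simple_mem_WP {K : Set B} {i : B} (hi : i ∈ K) : s i ∈ WP cs K :=
  Subgroup.subset_closure ⟨i, hi, rfl⟩

lemma wordProd_mem_WP {K : Set B} {ω : List B} (h : ∀ i ∈ ω, i ∈ K) : π ω ∈ WP cs K := by
  induction ω with
  | nil => exact one_mem _
  | cons i ω ih =>
    rw [wordProd_cons]
    exact mul_mem (simple_mem_WP cs (h i mem_cons_self)) (ih fun j hj => h j (mem_cons_of_mem i hj))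

lemma exists_word_of_mem_WP {K : Set B} {w : W} (h : w ∈ WP cs K) :
    ∃ ω : List B, (∀ i ∈ ω, i ∈ K) ∧ π ω = w := by
  induction h using Subgroup.closure_induction with
  | mem _ hw =>
    obtain ⟨i, hi, rfl⟩ := hw
    exact ⟨[i], by simpa using hi, cs.wordProd_singleton i⟩
  | one => exact ⟨[], by simp, cs.wordProd_nil⟩
  | mul _ _ _ _ ih₁ ih₂ =>
    obtain ⟨ω₁, h₁, rfl⟩ := ih₁
    obtain ⟨ω₂, h₂, rfl⟩ := ih₂
    exact ⟨ω₁ ++ ω₂, fun i hi => (mem_append.mp hi).elim (h₁ i) (h₂ i), cs.wordProd_append _ _⟩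
  | inv _ _ ih =>
    obtain ⟨ω, hω, rfl⟩ := ih
    exact ⟨ω.reverse, fun i hi => hω i (mem_reverse.mp hi), cs.wordProd_reverse ω⟩

/-- The deletion property. -/
lemma exists_isReduced_sublist (ω : List B) :
    ∃ ω' : List B, ω' <+ ω ∧ cs.IsReduced ω' ∧ π ω' = π ω := by
  induction ω with
  | nil => exact ⟨[], Sublist.refl _, by simp [CoxeterSystem.IsReduced], rfl⟩
  | cons i ω ih =>
    obtain ⟨ω', hsub, hred, hprod⟩ := ih
    rcases cs.length_simple_mul (π ω') i with hlen | hlen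
    · refine ⟨i :: ω', hsub.cons_cons i, ?_, by rw [wordProd_cons, wordProd_cons, hprod]⟩
      rw [CoxeterSystem.IsReduced, wordProd_cons, hlen, hred.eq, length_cons]
    · obtain ⟨k, hk, hkt⟩ :=
        exists_wordProd_eraseIdx_eq_mul cs (cs.isReflection_simple i)
          (by omega : ℓ (s i * π ω') < ℓ (π ω'))
      refine ⟨ω'.eraseIdx k, (eraseIdx_sublist _ _).trans (hsub.cons i), ?_,
        by rw [hkt, hprod, wordProd_cons]⟩
      rw [CoxeterSystem.IsReduced, hkt, length_eraseIdx_of_lt hk]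
      have := hred.eq
      omega

lemma exists_isReduced_word_of_mem_WP {K : Set B} {w : W} (h : w ∈ WP cs K) :
    ∃ ω : List B, (∀ i ∈ ω, i ∈ K) ∧ cs.IsReduced ω ∧ π ω = w := by
  obtain ⟨ω, hK, rfl⟩ := exists_word_of_mem_WP cs h
  obtain ⟨ω', hsub, hred, hprod⟩ := exists_isReduced_sublist cs ω
  exact ⟨ω', fun i hi => hK i (hsub.subset hi), hred, hprod⟩

theorem length_mul_eq_add_of_minimal_left {K : Set B} {w a : W}
    (hw : ∀ c ∈ WP cs K, ℓ w ≤ ℓ (c * w)) (ha : a ∈ WP cs K) : ℓ (a * w) = ℓ a + ℓ w := by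
  obtain ⟨α, hαK, hα, rfl⟩ := exists_isReduced_word_of_mem_WP cs ha
  obtain ⟨ω, hω, rfl⟩ := cs.exists_isReduced w
  rw [hα.eq]
  clear ha
  induction α with
  | nil => simp
  | cons i α ih =>
    have hαK' : ∀ j ∈ α, j ∈ K := fun j hj => hαK j (mem_cons_of_mem i hj)
    have ih := ih hαK' (by simpa using hα.drop 1)
    rw [wordProd_cons, mul_assoc, length_cons]
    rcases cs.length_simple_mul (π α * π ω) i with hlen | hlen
    · omega
    have hlt : ℓ (s i * π (α ++ ω)) < ℓ (π (α ++ ω)) := by rw [wordProd_append]; omega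
    rcases exists_wordProd_eraseIdx_append cs (cs.isReflection_simple i) hlt with
      ⟨k, hk, hkt⟩ | ⟨k, hk, hkt⟩
    · have hle := cs.length_wordProd_le (α.eraseIdx k)
      rw [hkt, ← wordProd_cons, hα.eq, length_eraseIdx_of_lt hk, length_cons] at hle
      omega
    · have hc : (π α)⁻¹ * s i * π α ∈ WP cs K :=
        mul_mem (mul_mem (inv_mem (wordProd_mem_WP cs hαK'))
          (simple_mem_WP cs (hαK i mem_cons_self))) (wordProd_mem_WP cs hαK')
      have hle := cs.length_wordProd_le (ω.eraseIdx k)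
      rw [hkt, length_eraseIdx_of_lt hk] at hle
      have := hw _ hc
      rw [hω.eq] at this
      omega

theorem length_mul_eq_add_of_minimal_right {K : Set B} {x b : W}
    (hx : ∀ c ∈ WP cs K, ℓ x ≤ ℓ (x * c)) (hb : b ∈ WP cs K) : ℓ (x * b) = ℓ x + ℓ b := by
  have hx' : ∀ c ∈ WP cs K, ℓ x⁻¹ ≤ ℓ (c * x⁻¹) := fun c hc => by
    simpa [← cs.length_inv (c * x⁻¹)] using hx c⁻¹ (inv_mem hc)
  have := length_mul_eq_add_of_minimal_left cs hx' (inv_mem hb)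
  rw [← mul_inv_rev, cs.length_inv, cs.length_inv, cs.length_inv] at this
  omega

theorem minimal_left_of_not_isLeftDescent {K : Set B} {w : W}
    (h : ∀ i ∈ K, ¬ cs.IsLeftDescent w i) : ∀ a ∈ WP cs K, ℓ w ≤ ℓ (a * w) := by
  intro a ha
  obtain ⟨a₀, ha₀, hmin⟩ : ∃ a₀ ∈ WP cs K, ∀ c ∈ WP cs K, ℓ (a₀ * w) ≤ ℓ (c * w) :=
    ⟨_, Function.argminOn_mem _ _ ⟨a, ha⟩,
      fun c hc => Function.argminOn_le (fun c => ℓ (c * w)) _ hc⟩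
  have hy : ∀ c ∈ WP cs K, ℓ (a₀ * w) ≤ ℓ (c * (a₀ * w)) := fun c hc => by
    simpa [mul_assoc] using hmin (c * a₀) (mul_mem hc ha₀)
  have hw : ℓ w = ℓ a₀⁻¹ + ℓ (a₀ * w) := by
    simpa using length_mul_eq_add_of_minimal_left cs hy (inv_mem ha₀)
  obtain ⟨α, hαK, hα, hαa₀⟩ := exists_isReduced_word_of_mem_WP cs (inv_mem ha₀)
  cases α with
  | nil =>
    rw [← hαa₀, hα.eq, length_nil, zero_add] at hw
    exact hw ▸ hmin a ha
  | cons i α =>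
    refine absurd ?_ (h i (hαK i mem_cons_self))
    have hsw : s i * w = π α * (a₀ * w) := by
      rw [← mul_assoc, ← cs.simple_mul_simple_cancel_left (w := π α) i, ← wordProd_cons, hαa₀]
      group
    have hαK' : ∀ j ∈ α, j ∈ K := fun j hj => hαK j (mem_cons_of_mem i hj)
    have hlen := length_mul_eq_add_of_minimal_left cs hy (wordProd_mem_WP cs hαK')
    have hle := cs.length_wordProd_le α
    rw [← hαa₀, hα.eq, length_cons] at hw
    show ℓ (s i * w) < ℓ w
    rw [hsw]
    omega

theorem minimal_right_of_not_isRightDescent {K : Set B} {x : W}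
    (h : ∀ i ∈ K, ¬ cs.IsRightDescent x i) : ∀ b ∈ WP cs K, ℓ x ≤ ℓ (x * b) := by
  intro b hb
  have := minimal_left_of_not_isLeftDescent cs (w := x⁻¹)
    (fun i hi hd => h i hi (cs.isLeftDescent_inv_iff.mp hd)) b⁻¹ (inv_mem hb)
  rwa [← mul_inv_rev, cs.length_inv, cs.length_inv] at this

theorem isMinL_of_not_isLeftDescent {K : Set B} {w : W}
    (h : ∀ i ∈ K, ¬ cs.IsLeftDescent w i) : IsMinL cs K w := by
  intro a ha hne
  have hadd := length_mul_eq_add_of_minimal_left cs (minimal_left_of_not_isLeftDescent cs h) ha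
  have ha : ℓ a ≠ 0 := fun h0 => hne (by rw [cs.length_eq_zero_iff.mp h0, one_mul])
  omega

/-- Deodhar's lemma. -/
theorem simple_mul_eq_mul_simple_of_isRightDescent {x : W} {i j : B}
    (hi : ℓ x < ℓ (s i * x)) (hj : ℓ x < ℓ (x * s j)) (h : cs.IsRightDescent (s i * x) j) :
    s i * x = x * s j := by
  obtain ⟨χ, hχ, rfl⟩ := cs.exists_isReduced x
  have hsi := cs.length_simple_mul (π χ) i
  have hsj := cs.length_mul_simple (π χ) j
  have hlt : ℓ (s i * π (χ ++ [j])) < ℓ (π (χ ++ [j])) := by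
    rw [wordProd_append, wordProd_singleton, ← mul_assoc]
    exact h.trans_le (by omega)
  rcases exists_wordProd_eraseIdx_append cs (cs.isReflection_simple i) hlt with
    ⟨k, hk, hkt⟩ | ⟨k, hk, hkt⟩
  · have hle := cs.length_wordProd_le (χ.eraseIdx k)
    rw [hkt, length_eraseIdx_of_lt hk, ← hχ.eq] at hle
    omega
  · obtain rfl : k = 0 := by simpa using hk
    rw [eraseIdx_cons_zero, wordProd_nil, wordProd_singleton] at hkt
    calc s i * π χ = π χ * ((π χ)⁻¹ * s i * π χ * s j) * s j := by
          simp [mul_assoc, cs.simple_mul_simple_self]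
      _ = π χ * s j := by rw [← hkt, mul_one]

end Parabolic

/-- 2.1(a): if `x ∈ ᴷWᴷ'` and `u ∈ W_{K'}` has no left descent in
`K' ∩ Ad(x⁻¹)K`, then `xu ∈ ᴷW` and `l(xu) = l(x) + l(u)`. -/
theorem statement0 (cs : CoxeterSystem M W) (K K' : Set B) (x u : W)
    (hx : IsMinDC cs K K' x) (hu : u ∈ WP cs K')
    (humin : IsMinL cs (K' ∩ AdSet cs x⁻¹ K) u) :
    IsMinL cs K (x * u) ∧ cs.length (x * u) = cs.length x + cs.length u := by
  have hxR : ∀ b ∈ WP cs K', cs.length x ≤ cs.length (x * b) := fun b hb => by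
    by_cases hxb : x * b = x
    · rw [hxb]
    · simpa using (hx 1 (one_mem _) b hb (by simpa using hxb)).le
  have hlen := length_mul_eq_add_of_minimal_right cs hxR hu
  refine ⟨isMinL_of_not_isLeftDescent cs fun i hi hdesc => ?_, hlen⟩
  replace hdesc : cs.length (cs.simple i * (x * u)) < cs.length (x * u) := hdesc
  have hxi : cs.length x < cs.length (cs.simple i * x) := by
    simpa using hx _ (simple_mem_WP cs hi) 1 (one_mem _)
      (by simpa using fun h => cs.length_simple_mul_ne x i (congrArg cs.length h))
  by_cases hmin : ∀ j ∈ K', ¬ cs.IsRightDescent (cs.simple i * x) j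
  · have := length_mul_eq_add_of_minimal_right cs (minimal_right_of_not_isRightDescent cs hmin) hu
    rw [← mul_assoc] at hdesc
    omega
  push Not at hmin
  obtain ⟨j, hj, hdj⟩ := hmin
  have hsij : cs.simple i * x = x * cs.simple j :=
    simple_mul_eq_mul_simple_of_isRightDescent cs hxi
      ((hxR _ (simple_mem_WP cs hj)).lt_of_ne (cs.length_mul_simple_ne x j).symm) hdj
  have hjAd : j ∈ AdSet cs x⁻¹ K := ⟨i, hi, by rw [inv_inv, mul_assoc, hsij]; group⟩
  have hju : cs.length u < cs.length (cs.simple j * u) :=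
    humin _ (simple_mem_WP cs ⟨hj, hjAd⟩)
      fun h => cs.length_simple_mul_ne u j (congrArg cs.length h)
  have hxju := length_mul_eq_add_of_minimal_right cs hxR (mul_mem (simple_mem_WP cs hj) hu)
  rw [← mul_assoc, hsij, mul_assoc] at hdesc
  omega

end Lusztig
end

section
/- Let (W, S) be a Coxeter system with W finite (or assume all double cosets have unique minimal elements), ε an automorphism, and (J_n, w_n)_{n≥0} ∈ T(J, ε). If J_{n−1} = J_n for some n ≥ 1, then w_{n−1} = w_n. Consequently, since the decreasing chain J_0 ⊇ J_1 ⊇ … of subsets of the finite set S stabilizes, the sequence (w_n) is eventually constant. -/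
namespace Lusztig

variable {B : Type*} {W : Type*} [Group W] {M : CoxeterMatrix B}

lemma minDC_unique (cs : CoxeterSystem M W) (K K' : Set B) (x y : W)
    (hx : IsMinDC cs K K' x) (hy : IsMinDC cs K K' y)
    (a : W) (ha : a ∈ WP cs K) (b : W) (hb : b ∈ WP cs K') (h : y = a * x * b) :
    x = y := by
  by_contra hne
  have h1 : cs.length x < cs.length y := by
    have := hx a ha b hb (by rw [← h]; exact fun hc => hne hc.symm)
    rwa [← h] at this
  have h2 : cs.length y < cs.length x := by
    have heq : a⁻¹ * y * b⁻¹ = x := by rw [h]; group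
    have := hy a⁻¹ (inv_mem ha) b⁻¹ (inv_mem hb) (by rw [heq]; exact hne)
    rwa [heq] at this
  omega

/-- If `(J_n, w_n) ∈ T(J, ε)` and `J_{n-1} = J_n`, then `w_{n-1} = w_n`;
consequently the sequence `(w_n)` is eventually constant. -/
theorem statement5 [Finite B] (cs : CoxeterSystem M W) (f : B ≃ B) (e : W ≃* W)
    (hef : ∀ b, e (cs.simple b) = cs.simple (f b)) (J J' : Set B)
    (hJ' : f '' J = J') (t : TSeq cs f J) :
    (∀ n, t.Jn n = t.Jn (n + 1) → t.w n = t.w (n + 1)) ∧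
      ∃ N, ∀ n, N ≤ n → t.w n = t.w N := by
  have step : ∀ n, t.Jn n = t.Jn (n + 1) → t.w n = t.w (n + 1) := by
    intro n hJ
    obtain ⟨a, ha, b, hb, hw⟩ := t.hd n
    have hc1 := t.hc n
    have hc2 := t.hc (n + 1)
    rw [← hJ] at hc2 ha
    exact minDC_unique cs _ _ _ _ hc1 hc2 a ha b hb hw
  refine ⟨step, ?_⟩
  -- the cardinalities form an antitone sequence of naturals
  set g : ℕ → ℕ := fun n => (t.Jn n).ncard with hg
  have hfin : ∀ n, (t.Jn n).Finite := fun n => Set.toFinite _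
  have hmem : sInf (Set.range g) ∈ Set.range g :=
    Nat.sInf_mem ⟨g 0, 0, rfl⟩
  obtain ⟨N, hN⟩ := hmem
  have hmono : ∀ n, g (n + 1) ≤ g n := fun n =>
    Set.ncard_le_ncard (t.hmono n) (hfin n)
  have hmono' : ∀ m n, m ≤ n → g n ≤ g m := by
    intro m n h
    induction n with
    | zero =>
      have : m = 0 := by omega
      simp [this]
    | succ k ih =>
      rcases Nat.lt_or_ge m (k + 1) with h' | h'
      · exact le_trans (hmono k) (ih (by omega))
      · have : m = k + 1 := by omega
        simp [this]
  have hconst : ∀ n, N ≤ n → t.Jn n = t.Jn N := by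
    intro n hn
    have h1 : g n ≤ g N := hmono' N n hn
    have h2 : g N ≤ g n := hN ▸ Nat.sInf_le ⟨n, rfl⟩
    have hsub : ∀ m k, m ≤ k → t.Jn k ⊆ t.Jn m := by
      intro m k h
      induction k with
      | zero => have : m = 0 := by omega
                simp [this]
      | succ j ih =>
        rcases Nat.lt_or_ge m (j + 1) with h' | h'
        · exact (t.hmono j).trans (ih (by omega))
        · have : m = j + 1 := by omega
          simp [this]
    exact Set.eq_of_subset_of_ncard_le (hsub N n hn) h2 (hfin N)
  refine ⟨N, ?_⟩
  have key : ∀ k, t.w (N + k) = t.w N := by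
    intro k
    induction k with
    | zero => rfl
    | succ j ih =>
      rw [show N + (j + 1) = (N + j) + 1 from rfl, ← step (N + j) ?_, ih]
      rw [hconst (N + j) (by omega), hconst (N + j + 1) (by omega)]
  intro n hn
  have : n = N + (n - N) := by omega
  rw [this, key]


end Lusztig
end

section
/- Let (W, S) be a Coxeter system with S finite (so that the number of subsets of S is finite) and ε an automorphism. For any (J_n, J'_n, u_n)_{n≥0} ∈ S(J, ε) with image w = φ((J_n, J'_n, u_n)) ∈ {}^{J'}W, there exists a subset J_∞ ⊆ J such that J_n = J'_n = J_∞ for all sufficiently large n, and w J_∞ w⁻¹ = ε(J_∞) (as subsets of S, i.e. Ad(w)J_∞ = ε(J_∞)). -/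
namespace Lusztig

variable {B : Type*} {W : Type*} [Group W] {M : CoxeterMatrix B}

/-- 2.6: for `(J_n, J'_n, u_n) ∈ S(J, ε)` with image `w = φ((J_n, J'_n, u_n))`,
there is `J_∞ ⊆ J` with `J_n = J'_n = J_∞` for all large `n`, and
`Ad(w) J_∞ = ε(J_∞)`. -/
theorem statement9 [Finite B] (cs : CoxeterSystem M W) (f : B ≃ B) (e : W ≃* W)
    (hef : ∀ b, e (cs.simple b) = cs.simple (f b)) (J : Set B)
    (s : SSeq cs f J) (w : W) (N0 : ℕ)
    (hw : ∀ n, N0 ≤ n → pr s.u (n + 1) = w) :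
    ∃ Ji : Set B, Ji ⊆ J ∧
      (∃ N, ∀ n, N ≤ n → s.Jn n = Ji ∧ s.J'n n = Ji) ∧
      (fun g => w * g * w⁻¹) '' (cs.simple '' Ji) = cs.simple '' (f '' Ji) := by
  classical
  have hsub : ∀ m n : ℕ, m ≤ n → s.Jn n ⊆ s.Jn m := by
    intro m n h
    induction n, h using Nat.le_induction with
    | base => exact subset_rfl
    | succ n hmn ih => exact (s.hmono n).trans ih
  -- the sequence of cardinalities stabilizes
  obtain ⟨N1, hN1⟩ : ∃ N1, (s.Jn N1).ncard = sInf (Set.range fun n => (s.Jn n).ncard) :=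
    Nat.sInf_mem (Set.range_nonempty (fun n => (s.Jn n).ncard))
  have hstab : ∀ n, N1 ≤ n → s.Jn n = s.Jn N1 := by
    intro n hn
    refine Set.eq_of_subset_of_ncard_le (hsub N1 n hn) ?_ (Set.toFinite _)
    rw [hN1]
    exact Nat.sInf_le ⟨n, rfl⟩
  set N := max N0 N1 with hN
  set Ji := s.Jn N with hJi
  have hJnN : ∀ n, N ≤ n → s.Jn n = Ji := by
    intro n hn
    rw [hstab n (le_trans (le_max_right N0 N1) hn), ← hstab N (le_max_right N0 N1)]
  -- key subset from hb at stage N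
  have hsubA : f '' Ji ⊆ AdSet cs w Ji := by
    have h1 := s.hb N
    rw [hJnN (N + 1) (Nat.le_succ_of_le le_rfl), hw N (le_max_left N0 N1), ← hJi] at h1
    rw [h1]
    exact Set.inter_subset_right
  -- cardinality argument: the conjugation equality
  have hinj : Function.Injective (fun g : W => w * g * w⁻¹) := by
    intro a b h
    simp only at h
    exact mul_left_cancel (mul_right_cancel h)
  have hQ : cs.simple '' (f '' Ji) = e '' (cs.simple '' Ji) := by
    rw [← Set.image_comp, ← Set.image_comp]
    exact (Set.image_congr fun b _ => (hef b)).symm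
  have key : (fun g => w * g * w⁻¹) '' (cs.simple '' Ji) = cs.simple '' (f '' Ji) := by
    have hQP : cs.simple '' (f '' Ji) ⊆ (fun g => w * g * w⁻¹) '' (cs.simple '' Ji) := by
      rintro x ⟨sb, hsb, rfl⟩
      obtain ⟨t, ht, hts⟩ := hsubA hsb
      exact ⟨cs.simple t, ⟨t, ht, rfl⟩, hts.symm⟩
    have hcardP : ((fun g => w * g * w⁻¹) '' (cs.simple '' Ji)).ncard
        = (cs.simple '' Ji).ncard := Set.ncard_image_of_injective _ hinj
    have hcardQ : (cs.simple '' (f '' Ji)).ncard = (cs.simple '' Ji).ncard := by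
      rw [hQ]
      exact Set.ncard_image_of_injective _ e.injective
    refine (Set.eq_of_subset_of_ncard_le hQP ?_ ((Set.toFinite _).image _)).symm
    rw [hcardP, hcardQ]
  -- J'n stabilizes to Ji as well
  have hJ' : ∀ n, N ≤ n → s.J'n (n + 1) = Ji := by
    intro n hn
    have h1 := s.hc n
    rw [hJnN n hn, hw n (le_trans (le_max_left N0 N1) hn)] at h1
    rw [h1]
    refine Set.inter_eq_self_of_subset_left ?_
    intro t ht
    have hmem : (w * cs.simple t * w⁻¹) ∈ cs.simple '' (f '' Ji) := by
      rw [← key]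
      exact ⟨cs.simple t, ⟨t, ht, rfl⟩, rfl⟩
    obtain ⟨b, hb, hbs⟩ := hmem
    refine ⟨b, hb, ?_⟩
    rw [hbs]
    group
  refine ⟨Ji, ?_, ⟨N + 1, ?_⟩, key⟩
  · exact (hsub 0 N (Nat.zero_le N)).trans s.hJ0.subset
  · intro n hn
    obtain ⟨m, rfl⟩ : ∃ m, n = m + 1 := ⟨n - 1, by omega⟩
    exact ⟨hJnN (m + 1) (by omega), hJ' m (by omega)⟩

end Lusztig
end

section
/- Let (W, S) be a Coxeter system and J' ⊆ S. With the inductive construction of (J_n, J'_n, u_n) from w ∈ {}^{J'}W as in the proof of Lusztig's Proposition 2.5, for all n ≥ 1 one has J'_n ⊆ Ad(u_0 u_1 ⋯ u_{n−1})⁻¹ J', i.e. (u_0⋯u_{n−1}) s (u_0⋯u_{n−1})⁻¹ ∈ W_{J'} for every s ∈ J'_n. -/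
namespace Lusztig

variable {B : Type*} {W : Type*} [Group W] {M : CoxeterMatrix B}

/-- 2.5(c): in the inductive construction of `ψ(w)` in the proof of
Proposition 2.5, for all `n ≥ 1` one has
`J'_n ⊆ Ad(u_0 u_1 ⋯ u_{n-1})⁻¹ J'`. -/
theorem statement13 (cs : CoxeterSystem M W) (f : B ≃ B) (e : W ≃* W)
    (hef : ∀ b, e (cs.simple b) = cs.simple (f b)) (J J' : Set B)
    (hJ' : f '' J = J') (w : W) (hw : IsMinL cs J' w)
    (Jn J'n : ℕ → Set B) (u : ℕ → W)
    (hJ0 : Jn 0 = J) (hJ'0 : J'n 0 = J')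
    (hrecJ : ∀ n, f '' Jn (n + 1) = (f '' Jn n) ∩ AdSet cs (pr u (n + 1)) (Jn n))
    (hrecJ' : ∀ n, J'n (n + 1) = Jn n ∩ AdSet cs (pr u (n + 1))⁻¹ (f '' Jn n))
    (hmin : ∀ n, IsMinOf cs J' (Jn n) w (pr u (n + 1))) :
    ∀ n, J'n (n + 1) ⊆ AdSet cs (pr u (n + 1))⁻¹ J' := by
  have hsub : ∀ n, f '' Jn n ⊆ J' := by
    intro n
    induction n with
    | zero => rw [hJ0, hJ']
    | succ k ih =>
      rw [hrecJ k]
      exact fun x hx => ih hx.1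
  intro n s hs
  rw [hrecJ' n] at hs
  obtain ⟨t, ht, hts⟩ := hs.2
  exact ⟨t, hsub n ht, hts⟩

end Lusztig
end

section
/- Let (W, S) be a Coxeter system with S finite, and let w ∈ {}^{J'}W with the inductively constructed sequence (J_n, J'_n, u_n) as in the proof of Lusztig's Proposition 2.5. If n is large enough that J_n = J_{n+1}, then u_0 u_1 ⋯ u_n = w. In particular w = min(W_{J'} w W_{J_n}) for such n. -/
namespace Lusztig

variable {B : Type*} {W : Type*} [Group W] {M : CoxeterMatrix B}

/-- 2.5(f): in the inductive construction of `ψ(w)` in the proof of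
Proposition 2.5, if `J_n = J_{n+1}` then `u_0 u_1 ⋯ u_n = w`; in particular
`w = min(W_{J'} w W_{J_n})` for such `n`. -/
theorem statement14 [Finite B] (cs : CoxeterSystem M W) (f : B ≃ B) (e : W ≃* W)
    (hef : ∀ b, e (cs.simple b) = cs.simple (f b)) (J J' : Set B)
    (hJ' : f '' J = J') (w : W) (hw : IsMinL cs J' w)
    (Jn J'n : ℕ → Set B) (u : ℕ → W)
    (hJ0 : Jn 0 = J) (hJ'0 : J'n 0 = J')
    (hrecJ : ∀ n, f '' Jn (n + 1) = (f '' Jn n) ∩ AdSet cs (pr u (n + 1)) (Jn n))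
    (hrecJ' : ∀ n, J'n (n + 1) = Jn n ∩ AdSet cs (pr u (n + 1))⁻¹ (f '' Jn n))
    (hmin : ∀ n, IsMinOf cs J' (Jn n) w (pr u (n + 1))) :
    ∀ n, Jn n = Jn (n + 1) →
      pr u (n + 1) = w ∧ IsMinOf cs J' (Jn n) w w := by
  have hJsub : ∀ n, f '' Jn n ⊆ J' := by
    intro n
    induction n with
    | zero => rw [hJ0, hJ']
    | succ k ih =>
        rw [hrecJ k]
        exact fun s hs => ih hs.1
  intro n hn
  set x := pr u (n + 1) with hx
  have hsub : f '' Jn n ⊆ AdSet cs x (Jn n) := by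
    intro s hs
    have h := hrecJ n
    rw [← hn] at h
    rw [h] at hs
    exact hs.2
  set A : Set W := cs.simple '' Jn n with hA
  have hAfin : A.Finite := (Set.toFinite _).image _
  have hmaps : Set.MapsTo (fun y => x⁻¹ * e y * x) A A := by
    rintro y ⟨t, ht, rfl⟩
    obtain ⟨t', ht', heq⟩ := hsub ⟨t, ht, rfl⟩
    refine ⟨t', ht', ?_⟩
    simp only [hef, heq]
    group
  have hinj : Set.InjOn (fun y => x⁻¹ * e y * x) A := fun a _ b _ h =>
    e.injective (mul_left_cancel (mul_right_cancel h))
  have hsurj : Set.SurjOn (fun y => x⁻¹ * e y * x) A A :=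
    ((Set.Finite.injOn_iff_bijOn_of_mapsTo hAfin hmaps).mp hinj).surjOn
  have hgen : ∀ z ∈ A, x * z * x⁻¹ ∈ WP cs J' := by
    intro z hz
    obtain ⟨y, hy, hyz⟩ := hsurj hz
    have hz' : x * z * x⁻¹ = e y := by
      rw [← hyz]; group
    rw [hz']
    obtain ⟨t, ht, rfl⟩ := hy
    rw [hef]
    exact Subgroup.subset_closure ⟨f t, hJsub n ⟨t, ht, rfl⟩, rfl⟩
  have hconj : ∀ g ∈ WP cs (Jn n), x * g * x⁻¹ ∈ WP cs J' := by
    intro g hg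
    have hle : (WP cs (Jn n)).map ((MulAut.conj x).toMonoidHom) ≤ WP cs J' := by
      rw [WP, MonoidHom.map_closure, Subgroup.closure_le]
      rintro z ⟨y, hy, rfl⟩
      simpa using hgen y hy
    have : x * g * x⁻¹ = (MulAut.conj x).toMonoidHom g := by simp
    rw [this]
    exact hle ⟨g, hg, rfl⟩
  obtain ⟨⟨a, ha, b, hb, hxab⟩, hminp⟩ := hmin n
  set c := a⁻¹ * (x * b⁻¹ * x⁻¹) with hcdef
  have hc : c ∈ WP cs J' := mul_mem (inv_mem ha) (hconj b⁻¹ (inv_mem hb))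
  have hwx : w = c * x := by
    rw [hcdef, hx, hxab]; group
  have hxw : x = w := by
    by_contra hne
    have h1 : cs.length x < cs.length w := by
      have := hminp 1 (one_mem _) 1 (one_mem _)
        (by simpa using fun h => hne h.symm)
      simpa using this
    have hcw : c⁻¹ * w = x := by rw [hwx]; group
    have h2 : cs.length w < cs.length x := by
      have := hw c⁻¹ (inv_mem hc) (by rw [hcw]; exact fun h => hne h)
      rwa [hcw] at this
    exact lt_asymm h1 h2
  exact ⟨hxw, hxw ▸ hmin n⟩

end Lusztig
end
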